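/- Let m be an odd positive integer and let a(X), b(X) ∈ R_m, not both zero. Set g_{a,b}(X) = gcd(a(X), b(X), X^m − 1) in (Z/2)[X]. Then the minimum weight of the code C_{a,b} satisfies wt(C_{a,b}) = min { wt_H(c(X)a(X)) + 2·wt_H(c(X)b(X)) : c(X) ∈ ⟨g_{a,b}(X)⟩, c(X) ≠ 0 }, where ⟨g_{a,b}(X)⟩ is the ideal of R_m generated by g_{a,b}(X); that is, every nonzero codeword of C_{a,b} arises as (c·a, 2(c·b)) for a unique nonzero c(X) ∈ ⟨g_{a,b}(X)⟩. -/

import Mathlib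

/-!
Since `m` is odd, `X^m - 1` is separable over `Z/2`, so `R_m` is reduced, and for the divisor
`g = gcd(A, B, X^m - 1)` Bézout with the coprime cofactor `(X^m - 1)/g` produces an identity
element `e` of the ideal `⟨g⟩ = ⟨a, b⟩`. A codeword `(f a, 2(f b))` is then also
`((fe) a, 2((fe) b))` with `fe ∈ ⟨a, b⟩`, and this representative is unique: if `c ∈ ⟨a, b⟩`
annihilates `a` and `b` then `c² = 0`, hence `c = 0`. Doubling `R_m → R'_m` is injective and
turns Hamming weight into twice the Lee weight, so the two weight sets coincide.
-/

open Polynomial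

noncomputable section

/-- The polynomial `X^m - 1` over `Z/2`. -/
def fm (m : ℕ) : Polynomial (ZMod 2) := X ^ m - 1

/-- The polynomial `X^m - 1` over `Z/4`. -/
def fm4 (m : ℕ) : Polynomial (ZMod 4) := X ^ m - 1

/-- `R_m = (Z/2)[X]/⟨X^m - 1⟩`. -/
abbrev R2 (m : ℕ) : Type := Polynomial (ZMod 2) ⧸ Ideal.span {fm m}

/-- `R'_m = (Z/4)[X]/⟨X^m - 1⟩`. -/
abbrev R4 (m : ℕ) : Type := Polynomial (ZMod 4) ⧸ Ideal.span {fm4 m}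

def mk2 (m : ℕ) : Polynomial (ZMod 2) →+* R2 m := Ideal.Quotient.mk _

def mk4 (m : ℕ) : Polynomial (ZMod 4) →+* R4 m := Ideal.Quotient.mk _

/-- The canonical representative (of degree `< m`) of an element of `R2 m`. -/
def rep2 (m : ℕ) (r : R2 m) : Polynomial (ZMod 2) :=
  (Function.surjInv (Ideal.Quotient.mk_surjective (I := Ideal.span {fm m})) r) %ₘ fm m

/-- The canonical representative (of degree `< m`) of an element of `R4 m`. -/
def rep4 (m : ℕ) (r : R4 m) : Polynomial (ZMod 4) :=
  (Function.surjInv (Ideal.Quotient.mk_surjective (I := Ideal.span {fm4 m})) r) %ₘ fm4 m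

/-- Coefficientwise doubling map `(Z/2)[X] → (Z/4)[X]`, `a ↦ 2a` on each coefficient. -/
def polyDbl (p : Polynomial (ZMod 2)) : Polynomial (ZMod 4) :=
  ∑ i ∈ p.support, Polynomial.C (2 * ((p.coeff i).val : ZMod 4)) * X ^ i

/-- The additive embedding `R_m → R'_m`, `f ↦ 2f`. -/
def iota (m : ℕ) (r : R2 m) : R4 m := mk4 m (polyDbl (rep2 m r))

/-- Hamming weight of an element of `R_m` (of its coefficient vector). -/
def wt2 (m : ℕ) (r : R2 m) : ℕ := (rep2 m r).support.card

/-- Lee weight of an element of `Z/4`. -/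
def lee (x : ZMod 4) : ℕ := min x.val (4 - x.val)

/-- Lee weight of an element of `R'_m` (of its coefficient vector). -/
def wtLee (m : ℕ) (r : R4 m) : ℕ := ∑ i ∈ (rep4 m r).support, lee ((rep4 m r).coeff i)

/-- The augmentation ideal `J_m = ⟨X - 1⟩` of `R_m`. -/
def Jm (m : ℕ) : Ideal (R2 m) := Ideal.span {mk2 m (X - 1)}

/-- The `Z2Z4`-additive cyclic code `C_{a,b} = {(f·a, 2(f·b)) : f ∈ R_m}`. -/
def Cab (m : ℕ) (a b : R2 m) : Set (R2 m × R4 m) :=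
  {w | ∃ f : R2 m, w = (f * a, iota m (f * b))}

/-- Dimension of `C_{a,b}` as a vector space over `Z/2`, i.e. `log₂ |C_{a,b}|`. -/
def dimCab (m : ℕ) (a b : R2 m) : ℕ := Nat.log 2 (Nat.card (Cab m a b))

/-- `(X^m - 1)/(X - 1) = X^{m-1} + ⋯ + X + 1` over `Z/2`. -/
def geomPoly (m : ℕ) : Polynomial (ZMod 2) := ∑ i ∈ Finset.range m, X ^ i

/-- `ℓ_m`: minimal degree of the irreducible factors of `(X^m-1)/(X-1)` in `(Z/2)[X]`. -/
def ell (m : ℕ) : ℕ :=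
  sInf {d | ∃ p : Polynomial (ZMod 2), Irreducible p ∧ p ∣ geomPoly m ∧ p.natDegree = d}

/-- The binary entropy function `H(x) = -x·log₂x - (1-x)·log₂(1-x)`. -/
def Hent (x : ℝ) : ℝ := -(x * Real.logb 2 x) - (1 - x) * Real.logb 2 (1 - x)

theorem eq_zero_of_mem_span_of_mul_eq_zero {S : Type*} [CommRing S] [IsReduced S] {s : Set S}
    {c : S} (hc : c ∈ Ideal.span s) (hs : ∀ x ∈ s, c * x = 0) : c = 0 := by
  have hker : Ideal.span s ≤ LinearMap.ker (LinearMap.mulLeft S c) := Ideal.span_le.2 hs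
  exact IsReduced.eq_zero c ⟨2, by rw [sq]; exact hker hc⟩

theorem exists_mul_eq_self_of_isCoprime {R S : Type*} [CommRing R] [CommRing S] (φ : R →+* S)
    {g h : R} (hgh : IsCoprime g h) (h0 : φ (g * h) = 0) :
    ∃ e ∈ Ideal.span {φ g}, ∀ x ∈ Ideal.span {φ g}, e * x = x := by
  obtain ⟨u, v, huv⟩ := hgh
  have h1 : φ u * φ g + φ v * φ h = 1 := by simpa using congrArg φ huv
  rw [map_mul] at h0
  refine ⟨φ u * φ g, Ideal.mul_mem_left _ _ (Ideal.mem_span_singleton_self _), ?_⟩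
  intro x hx
  obtain ⟨y, rfl⟩ := Ideal.mem_span_singleton'.1 hx
  linear_combination y * φ g * h1 - y * φ v * h0

section QuotientRepresentative

variable {R : Type*} [CommRing R] {F : R[X]}

theorem surjInv_mk_modByMonic_eq (hF : F.Monic) (r : R[X] ⧸ Ideal.span {F}) :
    Function.surjInv Ideal.Quotient.mk_surjective r %ₘ F = AdjoinRoot.modByMonicHom hF r := by
  conv_rhs => rw [← Function.surjInv_eq Ideal.Quotient.mk_surjective r]
  exact (AdjoinRoot.modByMonicHom_mk hF _).symm

theorem mk_surjInv_modByMonic (hF : F.Monic) (r : R[X] ⧸ Ideal.span {F}) :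
    Ideal.Quotient.mk _ (Function.surjInv Ideal.Quotient.mk_surjective r %ₘ F) = r := by
  rw [surjInv_mk_modByMonic_eq hF]
  exact AdjoinRoot.mk_leftInverse hF r

theorem surjInv_mk_modByMonic [Nontrivial R] (hF : F.Monic) {q : R[X]} (hq : q.degree < F.degree) :
    Function.surjInv Ideal.Quotient.mk_surjective (Ideal.Quotient.mk (Ideal.span {F}) q) %ₘ F
      = q := by
  rw [surjInv_mk_modByMonic_eq hF]
  exact (AdjoinRoot.modByMonicHom_mk hF q).trans ((modByMonic_eq_self_iff hF).2 hq)

end QuotientRepresentative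

instance : Nontrivial (ZMod 4) := ZMod.nontrivial_iff.2 (by decide)

theorem fm_monic {m : ℕ} (hm : 0 < m) : (fm m).Monic := by
  simpa [fm] using monic_X_pow_sub_C (1 : ZMod 2) hm.ne'

theorem degree_fm {m : ℕ} (hm : 0 < m) : (fm m).degree = m := by
  simpa [fm] using degree_X_pow_sub_C hm (1 : ZMod 2)

theorem fm4_monic {m : ℕ} (hm : 0 < m) : (fm4 m).Monic := by
  simpa [fm4] using monic_X_pow_sub_C (1 : ZMod 4) hm.ne'

theorem degree_fm4 {m : ℕ} (hm : 0 < m) : (fm4 m).degree = m := by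
  simpa [fm4] using degree_X_pow_sub_C hm (1 : ZMod 4)

theorem fm_separable {m : ℕ} (hm : Odd m) : (fm m).Separable := by
  simpa [fm] using
    separable_X_pow_sub_C (1 : ZMod 2) (ZMod.natCast_ne_zero_iff_odd.2 hm) one_ne_zero

theorem mk2_fm (m : ℕ) : mk2 m (fm m) = 0 :=
  Ideal.Quotient.eq_zero_iff_mem.2 (Ideal.mem_span_singleton_self _)

theorem isReduced_R2 {m : ℕ} (hm : Odd m) : IsReduced (R2 m) :=
  (Ideal.isRadical_iff_quotient_reduced _).1 <|
    isRadical_iff_span_singleton.1 (fm_separable hm).squarefree.isRadical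

theorem span_mk2_gcd (m : ℕ) (A B : (ZMod 2)[X]) :
    Ideal.span {mk2 m (EuclideanDomain.gcd A (EuclideanDomain.gcd B (fm m)))}
      = Ideal.span {mk2 m A, mk2 m B} := by
  have hgcd := fun x y => congrArg (Ideal.map (mk2 m)) (EuclideanDomain.span_gcd x y)
  simp only [Ideal.map_span, Set.image_singleton, Set.image_insert_eq] at hgcd
  rw [hgcd, Ideal.span_insert, Ideal.span_insert (mk2 m A), hgcd, mk2_fm, Ideal.span_pair_zero]

theorem exists_mem_span_mk2_mul_eq_self {m : ℕ} (hm : Odd m) {g : (ZMod 2)[X]} (hg : g ∣ fm m) :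
    ∃ e ∈ Ideal.span {mk2 m g}, ∀ x ∈ Ideal.span {mk2 m g}, e * x = x := by
  obtain ⟨h, hgh⟩ := hg
  exact exists_mul_eq_self_of_isCoprime (mk2 m) (hgh ▸ fm_separable hm).isCoprime
    (hgh ▸ mk2_fm m)

theorem mk2_rep2 {m : ℕ} (hm : 0 < m) (r : R2 m) : mk2 m (rep2 m r) = r :=
  mk_surjInv_modByMonic (fm_monic hm) r

theorem rep2_zero {m : ℕ} (hm : 0 < m) : rep2 m 0 = 0 :=
  (surjInv_mk_modByMonic_eq (fm_monic hm) 0).trans (map_zero _)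

theorem degree_rep2_lt {m : ℕ} (hm : 0 < m) (r : R2 m) : (rep2 m r).degree < m :=
  (degree_modByMonic_lt _ (fm_monic hm)).trans_eq (degree_fm hm)

theorem dbl_injective : Function.Injective fun x : ZMod 2 => 2 * (x.val : ZMod 4) := by
  decide

theorem dbl_eq_zero_iff : ∀ x : ZMod 2, 2 * (x.val : ZMod 4) = 0 ↔ x = 0 := by
  decide

theorem lee_dbl : ∀ x : ZMod 2, x ≠ 0 → lee (2 * (x.val : ZMod 4)) = 2 := by
  decide

theorem polyDbl_coeff (p : (ZMod 2)[X]) (j : ℕ) :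
    (polyDbl p).coeff j = 2 * ((p.coeff j).val : ZMod 4) := by
  rw [polyDbl, finsetSum_coeff]
  simp only [coeff_C_mul_X_pow]
  rw [Finset.sum_ite_eq]
  split_ifs with hj
  · rfl
  · simp [notMem_support_iff.1 hj]

theorem support_polyDbl (p : (ZMod 2)[X]) : (polyDbl p).support = p.support := by
  ext j
  simp only [mem_support_iff, polyDbl_coeff, ne_eq, dbl_eq_zero_iff]

theorem degree_polyDbl (p : (ZMod 2)[X]) : (polyDbl p).degree = p.degree := by
  simp only [degree, support_polyDbl]

theorem polyDbl_injective : Function.Injective polyDbl := fun p q h =>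
  ext fun j => dbl_injective <| by simpa only [polyDbl_coeff] using congrArg (coeff · j) h

theorem rep4_iota {m : ℕ} (hm : 0 < m) (r : R2 m) : rep4 m (iota m r) = polyDbl (rep2 m r) :=
  surjInv_mk_modByMonic (fm4_monic hm)
    (by rw [degree_polyDbl, degree_fm4 hm]; exact degree_rep2_lt hm r)

theorem iota_injective {m : ℕ} (hm : 0 < m) : Function.Injective (iota m) := by
  intro r s h
  have hrep := congrArg (rep4 m) h
  rw [rep4_iota hm, rep4_iota hm] at hrep
  rw [← mk2_rep2 hm r, ← mk2_rep2 hm s, polyDbl_injective hrep]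

theorem iota_zero {m : ℕ} (hm : 0 < m) : iota m 0 = 0 := by
  simp [iota, rep2_zero hm, polyDbl]

theorem wtLee_iota {m : ℕ} (hm : 0 < m) (r : R2 m) : wtLee m (iota m r) = 2 * wt2 m r := by
  rw [wtLee, rep4_iota hm, wt2, support_polyDbl, mul_comm, ← smul_eq_mul, ← Finset.sum_const]
  refine Finset.sum_congr rfl fun i hi => ?_
  rw [polyDbl_coeff]
  exact lee_dbl _ (mem_support_iff.1 hi)

section Code

variable {m : ℕ} [IsReduced (R2 m)] {a b : R2 m}

theorem eq_of_mem_span_of_codeword_eq (hm : 0 < m) {c c' : R2 m}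
    (hc : c ∈ Ideal.span {a, b}) (hc' : c' ∈ Ideal.span {a, b})
    (h : (c * a, iota m (c * b)) = (c' * a, iota m (c' * b))) : c = c' := by
  rw [Prod.mk.injEq, (iota_injective hm).eq_iff] at h
  refine sub_eq_zero.1 (eq_zero_of_mem_span_of_mul_eq_zero (Ideal.sub_mem _ hc hc') ?_)
  simp [sub_mul, h.1, h.2]

theorem codeword_ne_zero (hm : 0 < m) {c : R2 m} (hc : c ∈ Ideal.span {a, b}) (hc0 : c ≠ 0) :
    (c * a, iota m (c * b)) ≠ 0 := fun h =>
  hc0 <| eq_of_mem_span_of_codeword_eq hm hc (Ideal.zero_mem _) <| by simpa [iota_zero hm] using h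

theorem existsUnique_mem_span_codeword (hm : 0 < m) {e : R2 m} (he : e ∈ Ideal.span {a, b})
    (hea : e * a = a) (heb : e * b = b) :
    ∀ w ∈ Cab m a b, w ≠ 0 →
      ∃! c : R2 m, c ∈ Ideal.span {a, b} ∧ c ≠ 0 ∧ w = (c * a, iota m (c * b)) := by
  rintro _ ⟨f, rfl⟩ hw0
  have hfe : (f * a, iota m (f * b)) = (f * e * a, iota m (f * e * b)) := by
    rw [mul_assoc, mul_assoc, hea, heb]
  refine ⟨f * e, ⟨Ideal.mul_mem_left _ f he, ?_, hfe⟩, fun c ⟨hc, _, hcw⟩ => ?_⟩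
  · rintro hfe0
    exact hw0 (by simpa [hfe0, iota_zero hm] using hfe)
  · exact eq_of_mem_span_of_codeword_eq hm hc (Ideal.mul_mem_left _ f he) (hcw.symm.trans hfe)

end Code

theorem statement16_general (m : ℕ) (hm : Odd m)
    (A B : Polynomial (ZMod 2))
    (g : Polynomial (ZMod 2))
    (hg : g = EuclideanDomain.gcd A (EuclideanDomain.gcd B (fm m))) :
    (∀ w ∈ Cab m (mk2 m A) (mk2 m B), w ≠ 0 →
      ∃! c : R2 m, c ∈ Ideal.span {mk2 m g} ∧ c ≠ 0 ∧
        w = (c * mk2 m A, iota m (c * mk2 m B))) ∧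
    sInf {n : ℕ | ∃ w ∈ Cab m (mk2 m A) (mk2 m B), w ≠ 0 ∧
        wt2 m w.1 + wtLee m w.2 = n}
      = sInf {n : ℕ | ∃ c ∈ Ideal.span {mk2 m g}, c ≠ (0 : R2 m) ∧
          wt2 m (c * mk2 m A) + 2 * wt2 m (c * mk2 m B) = n} := by
  have := isReduced_R2 hm
  have hg_dvd : g ∣ fm m := hg ▸ (EuclideanDomain.gcd_dvd_right _ _).trans
    (EuclideanDomain.gcd_dvd_right _ _)
  obtain ⟨e, he, he_mul⟩ := exists_mem_span_mk2_mul_eq_self hm hg_dvd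
  have hspan : Ideal.span {mk2 m g} = Ideal.span {mk2 m A, mk2 m B} := hg ▸ span_mk2_gcd m A B
  rw [hspan] at he he_mul ⊢
  have hunique := existsUnique_mem_span_codeword hm.pos he
    (he_mul _ (Ideal.subset_span (by simp))) (he_mul _ (Ideal.subset_span (by simp)))
  refine ⟨hunique, congrArg sInf (Set.ext fun n => ⟨?_, ?_⟩)⟩
  · rintro ⟨w, hw, hw0, rfl⟩
    obtain ⟨c, ⟨hc, hc0, rfl⟩, -⟩ := hunique w hw hw0
    exact ⟨c, hc, hc0, by rw [wtLee_iota hm.pos]⟩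
  · rintro ⟨c, hc, hc0, rfl⟩
    exact ⟨_, ⟨c, rfl⟩, codeword_ne_zero hm.pos hc hc0, by rw [wtLee_iota hm.pos]⟩

/-- For `a = mk A`, `b = mk B` not both zero and
`g = gcd(A, B, X^m-1)`: every nonzero codeword of `C_{a,b}` arises as `(c·a, 2(c·b))`
for a unique nonzero `c ∈ ⟨g⟩`, and the minimum weight of `C_{a,b}` (Hamming weight on
the `Z/2`-part plus Lee weight on the `Z/4`-part) equals
`min { wt_H(c·a) + 2·wt_H(c·b) : 0 ≠ c ∈ ⟨g⟩ }`. -/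
theorem statement16 (m : ℕ) (hm : Odd m) (hmpos : 0 < m)
    (A B : Polynomial (ZMod 2)) (hab : ¬(mk2 m A = 0 ∧ mk2 m B = 0))
    (g : Polynomial (ZMod 2))
    (hg : g = EuclideanDomain.gcd A (EuclideanDomain.gcd B (fm m))) :
    (∀ w ∈ Cab m (mk2 m A) (mk2 m B), w ≠ 0 →
      ∃! c : R2 m, c ∈ Ideal.span {mk2 m g} ∧ c ≠ 0 ∧
        w = (c * mk2 m A, iota m (c * mk2 m B))) ∧
    sInf {n : ℕ | ∃ w ∈ Cab m (mk2 m A) (mk2 m B), w ≠ 0 ∧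
        wt2 m w.1 + wtLee m w.2 = n}
      = sInf {n : ℕ | ∃ c ∈ Ideal.span {mk2 m g}, c ≠ (0 : R2 m) ∧
          wt2 m (c * mk2 m A) + 2 * wt2 m (c * mk2 m B) = n} :=
  statement16_general m hm A B g hg
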